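/- Let K be a non-degenerate bilinear kernel on ℝ^d satisfying the size estimate with constant C_K and the ω-regularity estimate. Then there exist constants 0 < c₀ ≤ C₀ and A₁ ≥ 3 (depending only on d, C_K, ω and the non-degeneracy constant) such that for every A ≥ A₁, every cube Q¹ ⊂ ℝ^d with centre c_{Q¹}, and all dyadic grids D⁰, D², there exist cubes Q⁰ ∈ D⁰, Q² ∈ D² and points c_{Q⁰} ∈ Q⁰, c_{Q²} ∈ Q² such that: (i) c₀·A·ℓ(Q¹) ≤ max(|c_{Q⁰} − c_{Q¹}|, |c_{Q²} − c_{Q¹}|) ≤ C₀·A·ℓ(Q¹) and c₀·ℓ(Q¹) ≤ ℓ(Q⁰), ℓ(Q²) ≤ C₀·ℓ(Q¹); (ii) c₀·A^{−2d}|Q¹|^{−2} ≤ |K(c_{Q⁰}, c_{Q¹}, c_{Q²})| ≤ C₀·A^{−2d}|Q¹|^{−2}; (iii) for every y ∈ Q¹, ∫_{Q⁰}∫_{Q²} |K(x,y,z) − K(c_{Q⁰}, c_{Q¹}, c_{Q²})| dx dz ≤ C₀·ω(A^{−1})·A^{−2d}; (iv) for every y ∈ Q¹, c₀·A^{−2d}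 ≤ |∫_{Q⁰}∫_{Q²} K(x,y,z) dx dz| ≤ ∫_{Q⁰}∫_{Q²} |K(x,y,z)| dx dz ≤ C₀·A^{−2d}. -/

import Mathlib

open MeasureTheory Set Filter
open scoped ENNReal NNReal Classical

noncomputable section

namespace Paper

/-- `ℝ^d` with the Euclidean norm. -/
abbrev Rd (d : ℕ) := EuclideanSpace ℝ (Fin d)

variable {d : ℕ}

/-- An axis-parallel cube in `ℝ^d`, given by its centre and (positive) side length. -/
structure Cube (d : ℕ) where
  center : Rd d
  side : ℝ
  side_pos : 0 < side

/-- The cube as a (half-open) subset of `ℝ^d`. -/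
def Cube.set (Q : Cube d) : Set (Rd d) :=
  {x | ∀ i, Q.center i - Q.side / 2 ≤ x i ∧ x i < Q.center i + Q.side / 2}

/-- The volume `ℓ(Q)^d` of a cube. -/
def Cube.vol (Q : Cube d) : ℝ := Q.side ^ d

/-- The distance between two subsets of `ℝ^d`. -/
def setDist (s t : Set (Rd d)) : ℝ := sInf (Set.image2 dist s t)

/-- The maximal pairwise distance among three cubes. -/
def maxPairDist (Q0 Q1 Q2 : Cube d) : ℝ :=
  max (max (setDist Q0.set Q1.set) (setDist Q0.set Q2.set)) (setDist Q1.set Q2.set)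

/-- A dyadic grid on `ℝ^d`: for each `k ∈ ℤ` the cubes of side `2^k` form a partition,
and any two cubes are nested or disjoint. -/
def IsDyadicGrid (D : Set (Cube d)) : Prop :=
  (∀ Q ∈ D, ∃ k : ℤ, Q.side = 2 ^ k) ∧
  (∀ (k : ℤ) (x : Rd d), ∃! Q : Cube d, Q ∈ D ∧ Q.side = 2 ^ k ∧ x ∈ Q.set) ∧
  (∀ Q ∈ D, ∀ P ∈ D, Q.set ⊆ P.set ∨ P.set ⊆ Q.set ∨ Disjoint Q.set P.set)

/-- The average `⟨f⟩_Q` of a real function over a cube. -/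
def cubeAvg (Q : Cube d) (f : Rd d → ℝ) : ℝ := Q.vol⁻¹ * ∫ x in Q.set, f x

/-- The average `⟨f⟩_Q` of a complex function over a cube. -/
def cubeAvgC (Q : Cube d) (f : Rd d → ℂ) : ℂ := (Q.vol : ℂ)⁻¹ * ∫ x in Q.set, f x

/-- The mean oscillation `osc(b;Q) = ⨍_Q |b - ⟨b⟩_Q|`. -/
def osc (b : Rd d → ℂ) (Q : Cube d) : ℝ :=
  Q.vol⁻¹ * ∫ x in Q.set, ‖b x - cubeAvgC Q b‖

/-- The size estimate for a bilinear kernel. -/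
def SizeEstimate (d : ℕ) (K : Rd d → Rd d → Rd d → ℂ) (CK : ℝ) : Prop :=
  ∀ x y z : Rd d, ¬(x = y ∧ y = z) →
    ‖K x y z‖ ≤ CK / (‖x - y‖ + ‖x - z‖) ^ (2 * d)

/-- A modulus of continuity: increasing, subadditive, vanishing at `0`. -/
def IsModulus (ω : ℝ → ℝ) : Prop :=
  ω 0 = 0 ∧ (∀ t, 0 ≤ ω t) ∧ MonotoneOn ω (Set.Ici 0) ∧
  (∀ s t, 0 ≤ s → 0 ≤ t → ω (s + t) ≤ ω s + ω t) ∧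
  Filter.Tendsto ω (nhdsWithin 0 (Set.Ioi 0)) (nhds 0)

/-- A Dini modulus. -/
def IsDini (ω : ℝ → ℝ) : Prop :=
  IsModulus ω ∧ IntegrableOn (fun t => ω t / t) (Set.Ioc (0:ℝ) 1)

/-- The `ω`-regularity estimate, for `K` and both of its partial adjoints. -/
def RegEstimate (d : ℕ) (K : Rd d → Rd d → Rd d → ℂ) (ω : ℝ → ℝ) : Prop :=
  ∀ G ∈ ({K, fun x y z => K y x z, fun x y z => K z y x} :
      Set (Rd d → Rd d → Rd d → ℂ)),
    ∀ x x' y z : Rd d, ‖x - x'‖ ≤ (1 / 2) * max ‖x - y‖ ‖x - z‖ →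
      ‖G x y z - G x' y z‖ ≤
        ω (‖x - x'‖ / (‖x - y‖ + ‖x - z‖)) / (‖x - y‖ + ‖x - z‖) ^ (2 * d)

/-- Non-degeneracy of a bilinear kernel, with constant `c`. -/
def NonDegenerate (d : ℕ) (K : Rd d → Rd d → Rd d → ℂ) (c : ℝ) : Prop :=
  (∀ (y : Rd d) (r : ℝ), 0 < r → ∃ x z : Rd d,
      r < max (max ‖x - y‖ ‖x - z‖) ‖y - z‖ ∧ c / r ^ (2 * d) ≤ ‖K x y z‖) ∧
  (∀ (z : Rd d) (r : ℝ), 0 < r → ∃ x y : Rd d,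
      r < max (max ‖x - y‖ ‖x - z‖) ‖y - z‖ ∧ c / r ^ (2 * d) ≤ ‖K x y z‖)

/-- The trilinear commutator form
`Λ_b(f₁,f₂;f₀) = ∭ (b(x)-b(y)) K(x,y,z) f₁(y) f₂(z) f₀(x) dy dz dx`. -/
def Lam (K : Rd d → Rd d → Rd d → ℂ) (b : Rd d → ℂ)
    (f₁ f₂ f₀ : Rd d → ℂ) : ℂ :=
  ∫ x, ∫ y, ∫ z, (b x - b y) * K x y z * f₁ y * f₂ z * f₀ x

/-- A triple of cubes of equal side length, with maximal pairwise distance comparable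
(with fixed absolute constants) to `A` times the side length. -/
def SepTriple (A : ℝ) (Q0 Q1 Q2 : Cube d) : Prop :=
  Q0.side = Q1.side ∧ Q1.side = Q2.side ∧
  A * Q0.side / 2 ≤ maxPairDist Q0 Q1 Q2 ∧
  maxPairDist Q0 Q1 Q2 ≤ 8 * (d + 1) * A * Q0.side

/-- Bounded, compactly supported, measurable functions. -/
def BCS (f : Rd d → ℂ) : Prop :=
  Measurable f ∧ HasCompactSupport f ∧ ∃ M, ∀ x, ‖f x‖ ≤ M

/-- Off-support kernel representation, tested on bounded compactly supported functions
with no common point in all three supports. -/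
def HasOffSupportKernel (K : Rd d → Rd d → Rd d → ℂ)
    (T : (Rd d → ℂ) → (Rd d → ℂ) → Rd d → ℂ) : Prop :=
  ∀ f₁ f₂ f₃, BCS f₁ → BCS f₂ → BCS f₃ →
    Function.support f₁ ∩ Function.support f₂ ∩ Function.support f₃ = ∅ →
    ∫ x, T f₁ f₂ x * f₃ x = ∫ x, (∫ y, ∫ z, K x y z * f₁ y * f₂ z) * f₃ x

/-- Membership in `Σ`, the linear span of indicators of cubes. -/
def InSigma (f : Rd d → ℂ) : Prop :=
  ∃ (n : ℕ) (c : Fin n → ℂ) (Q : Fin n → Cube d),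
    f = fun x => ∑ i, c i * Set.indicator (Q i).set (fun _ => (1:ℂ)) x

/-- Kernel representation of a bilinear SIO, tested on `Σ`. -/
def HasSigmaKernel (K : Rd d → Rd d → Rd d → ℂ)
    (T : (Rd d → ℂ) → (Rd d → ℂ) → Rd d → ℂ) : Prop :=
  ∀ f₁ f₂ g, InSigma f₁ → InSigma f₂ → InSigma g →
    Function.support f₁ ∩ Function.support f₂ ∩ Function.support g = ∅ →
    ∫ x, T f₁ f₂ x * g x = ∫ x, (∫ y, ∫ z, K x y z * f₁ y * f₂ z) * g x

/-- Bilinearity (in the a.e. sense) on the class `L^p × L^q`. -/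
def BilinOn (p q : ℝ≥0∞) (T : (Rd d → ℂ) → (Rd d → ℂ) → Rd d → ℂ) : Prop :=
  (∀ f f' g, MemLp f p volume → MemLp f' p volume → MemLp g q volume →
      T (f + f') g =ᵐ[volume] T f g + T f' g) ∧
  (∀ (a : ℂ) f g, MemLp f p volume → MemLp g q volume →
      T (a • f) g =ᵐ[volume] a • T f g) ∧
  (∀ f g g', MemLp f p volume → MemLp g q volume → MemLp g' q volume →
      T f (g + g') =ᵐ[volume] T f g + T f g') ∧
  (∀ (a : ℂ) f g, MemLp f p volume → MemLp g q volume →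
      T f (a • g) =ᵐ[volume] a • T f g)

/-- Bilinearity (in the a.e. sense) on `Σ × Σ`. -/
def BilinOnSigma (T : (Rd d → ℂ) → (Rd d → ℂ) → Rd d → ℂ) : Prop :=
  (∀ f f' g, InSigma f → InSigma f' → InSigma g →
      T (f + f') g =ᵐ[volume] T f g + T f' g) ∧
  (∀ (a : ℂ) f g, InSigma f → InSigma g → T (a • f) g =ᵐ[volume] a • T f g) ∧
  (∀ f g g', InSigma f → InSigma g → InSigma g' →
      T f (g + g') =ᵐ[volume] T f g + T f g') ∧
  (∀ (a : ℂ) f g, InSigma f → InSigma g → T f (a • g) =ᵐ[volume] a • T f g)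

/-- Boundedness `L^p × L^q → L^σ` with constant `C`. -/
def BddOn (p q σ : ℝ≥0∞) (T : (Rd d → ℂ) → (Rd d → ℂ) → Rd d → ℂ) (C : ℝ) : Prop :=
  ∀ f g, MemLp f p volume → MemLp g q volume →
    eLpNorm (T f g) σ volume ≤
      ENNReal.ofReal C * (eLpNorm f p volume * eLpNorm g q volume)

/-- The first commutator `[b,T]_1(f,g) = b · T(f,g) - T(bf,g)`. -/
def comm1 (b : Rd d → ℂ) (T : (Rd d → ℂ) → (Rd d → ℂ) → Rd d → ℂ)
    (f g : Rd d → ℂ) : Rd d → ℂ :=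
  fun x => b x * T f g x - T (fun y => b y * f y) g x

/-- The truncation `T_ε` of a bilinear kernel. -/
def trunc (K : Rd d → Rd d → Rd d → ℂ) (ε : ℝ) (f g : Rd d → ℂ) (x : Rd d) : ℂ :=
  ∫ y, ∫ z, (if ε < max ‖x - y‖ ‖x - z‖ then K x y z else 0) * f y * g z

/-- The weak off-support testing condition `O^{∞,A}_{p,q,r}(b;K) ≤ C`. -/
def WeakTestBound (A p q r : ℝ) (K : Rd d → Rd d → Rd d → ℂ)
    (b : Rd d → ℂ) (C : ℝ) : Prop :=
  ∀ Q0 Q1 Q2 : Cube d, SepTriple A Q0 Q1 Q2 →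
    ∀ f₁ f₂ : Rd d → ℂ, Measurable f₁ → Measurable f₂ →
      (∀ y, ‖f₁ y‖ ≤ Set.indicator Q1.set (fun _ => (1:ℝ)) y) →
      (∀ z, ‖f₂ z‖ ≤ Set.indicator Q2.set (fun _ => (1:ℝ)) z) →
      ∃ F' : Set (Rd d), F' ⊆ Q0.set ∧ MeasurableSet F' ∧
        Q0.vol / 2 ≤ (volume F').toReal ∧
        ∀ f₀ : Rd d → ℂ, Measurable f₀ →
          (∀ x, ‖f₀ x‖ ≤ Set.indicator F' (fun _ => (1:ℝ)) x) →
          ‖Lam K b f₁ f₂ f₀‖ ≤ C * Q0.vol ^ (1 / p + 1 / q + (1 - 1 / r))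

/-- `‖[b,T]_1(f₁,f₂)‖_{L^{r,∞}} ≤ C' ‖f₁‖_{L^p} ‖f₂‖_{L^q}` on bounded compactly
supported functions, with the weak norm written out. -/
def WeakTypeCommBound (p q r : ℝ) (b : Rd d → ℂ)
    (T : (Rd d → ℂ) → (Rd d → ℂ) → Rd d → ℂ) (C' : ℝ) : Prop :=
  ∀ f₁ f₂, BCS f₁ → BCS f₂ → ∀ lam : ℝ, 0 < lam →
    ENNReal.ofReal lam * volume {x | lam < ‖comm1 b T f₁ f₂ x‖} ^ (1 / r) ≤
      ENNReal.ofReal C' * (eLpNorm f₁ (ENNReal.ofReal p) volume *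
        eLpNorm f₂ (ENNReal.ofReal q) volume)

/-- An `η`-sparse family with specified pairwise disjoint major subsets. -/
def IsSparseWith (η : ℝ) (S : Set (Cube d)) (E : Cube d → Set (Rd d)) : Prop :=
  (∀ Q ∈ S, E Q ⊆ Q.set ∧ MeasurableSet (E Q) ∧ η * Q.vol ≤ (volume (E Q)).toReal) ∧
  S.PairwiseDisjoint E

/-- An `η`-sparse family of cubes. -/
def IsSparse (η : ℝ) (S : Set (Cube d)) : Prop := ∃ E, IsSparseWith η S E

/-- Stopping children: the maximal cubes `P ∈ D`, `P ⊆ Q'`, with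
`⟨|f|⟩_P > 2⟨|f|⟩_{Q'}`. -/
def stopChildren (D : Set (Cube d)) (f : Rd d → ℂ) (Q' : Cube d) : Set (Cube d) :=
  {P | P ∈ D ∧ P.set ⊆ Q'.set ∧
      2 * cubeAvg Q' (fun x => ‖f x‖) < cubeAvg P (fun x => ‖f x‖) ∧
      ∀ P' ∈ D, P'.set ⊆ Q'.set → P.set ⊆ P'.set → P'.set ≠ P.set →
        cubeAvg P' (fun x => ‖f x‖) ≤ 2 * cubeAvg Q' (fun x => ‖f x‖)}

/-- The generations of the principal stopping family. -/
def stopGen (D : Set (Cube d)) (f : Rd d → ℂ) (Q : Cube d) : ℕ → Set (Cube d)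
  | 0 => {Q}
  | k + 1 => ⋃ P ∈ stopGen D f Q k, stopChildren D f P

/-- The principal stopping family. -/
def stopFam (D : Set (Cube d)) (f : Rd d → ℂ) (Q : Cube d) : Set (Cube d) :=
  ⋃ k, stopGen D f Q k

/-- `P = Π_S Q'` is the minimal cube of `S` containing `Q'`. -/
def IsMinStopAbove (S : Set (Cube d)) (Q' P : Cube d) : Prop :=
  P ∈ S ∧ Q'.set ⊆ P.set ∧ ∀ P' ∈ S, Q'.set ⊆ P'.set → P.set ⊆ P'.set

/-- The martingale difference `Δ_{Q'} f`. -/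
def deltaQ (D : Set (Cube d)) (f : Rd d → ℂ) (Q' : Cube d) (x : Rd d) : ℂ :=
  ∑' P : {P : Cube d // P ∈ D ∧ P.set ⊆ Q'.set ∧ 2 * P.side = Q'.side},
    Set.indicator (P.1).set (fun _ => cubeAvgC P.1 f - cubeAvgC Q' f) x

/-- The piece `f_P = ∑_{Q' : Π_S Q' = P} Δ_{Q'} f` of the stopping decomposition. -/
def stopPiece (D : Set (Cube d)) (f : Rd d → ℂ) (Q P : Cube d) (x : Rd d) : ℂ :=
  ∑' Q' : {Q' : Cube d // Q' ∈ D ∧ Q'.set ⊆ Q.set ∧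
      IsMinStopAbove (stopFam D f Q) Q' P},
    deltaQ D f Q'.1 x

/-- The Hardy–Littlewood maximal function (with values in `ℝ≥0∞`). -/
def HLMax (f : Rd d → ℂ) (x : Rd d) : ℝ≥0∞ :=
  ⨆ (r : ℝ) (_ : 0 < r),
    (volume (Metric.ball x r))⁻¹ * ∫⁻ y in Metric.ball x r, (‖f y‖₊ : ℝ≥0∞)

/-- The (pointwise) sup norm of a function. -/
def supNorm (f : Rd d → ℂ) : ℝ := ⨆ x, ‖f x‖

/-- The exponent `r'` with `1/r' = 1 - 1/r`, as an element of `ℝ≥0∞`. -/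
def rPrimeE (r : ℝ) : ℝ≥0∞ := if r = 1 then ⊤ else ENNReal.ofReal (r / (r - 1))

/-- The finite-family off-support testing condition `O^{Σ,A}_{p,q,r}(b;K) ≤ C`. -/
def SigmaTestBound (A p q r : ℝ) (K : Rd d → Rd d → Rd d → ℂ)
    (b : Rd d → ℂ) (C : ℝ) : Prop :=
  ∀ (N : ℕ) (Q0 Q1 Q2 : Fin (N + 1) → Cube d) (f₀ f₁ f₂ : Fin (N + 1) → Rd d → ℂ),
    (∀ k, SepTriple A (Q0 k) (Q1 k) (Q2 k)) →
    (∀ k, Measurable (f₀ k) ∧ Measurable (f₁ k) ∧ Measurable (f₂ k)) →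
    (∀ k x, ‖f₀ k x‖ ≤ Set.indicator (Q0 k).set (fun _ => (1:ℝ)) x) →
    (∀ k y, ‖f₁ k y‖ ≤ Set.indicator (Q1 k).set (fun _ => (1:ℝ)) y) →
    (∀ k z, ‖f₂ k z‖ ≤ Set.indicator (Q2 k).set (fun _ => (1:ℝ)) z) →
    (∀ k, 0 < volume (Function.support (f₀ k)) ∧
        0 < volume (Function.support (f₁ k)) ∧
        0 < volume (Function.support (f₂ k))) →
    ∑ k, ‖Lam K b (f₁ k) (f₂ k) (f₀ k)‖ ≤
      C * ((eLpNorm (fun y => ∑ k, supNorm (f₁ k) *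
              Set.indicator (Function.support (f₁ k)) (fun _ => (1:ℝ)) y)
            (ENNReal.ofReal p) volume).toReal
        * (eLpNorm (fun z => ∑ k, supNorm (f₂ k) *
              Set.indicator (Function.support (f₂ k)) (fun _ => (1:ℝ)) z)
            (ENNReal.ofReal q) volume).toReal
        * (eLpNorm (fun x => ∑ k, supNorm (f₀ k) *
              Set.indicator (Function.support (f₀ k)) (fun _ => (1:ℝ)) x)
            (rPrimeE r) volume).toReal)

/-!
Non-degeneracy at `y = c_{Q¹}` and scale `r = A ℓ(Q¹)` gives points `x₀, x₂` whose triple with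
`c_{Q¹}` has diameter `> r` and `|K(x₀, c_{Q¹}, x₂)| ≥ c r^{-2d}`; comparing with the size estimate
shows the diameter is also `≤ (C_K / c) r`. Dyadic cubes `Q⁰ ∋ x₀`, `Q² ∋ x₂` of side between
`ℓ(Q¹)` and `2ℓ(Q¹)` have diameter `≤ 2dℓ(Q¹)`, so for `A ≥ 16d` every triple in `Q⁰ × Q¹ × Q²`
still has diameter `≥ r/2`. There the size estimate bounds `K` by `r^{-2d}`, and the regularity
estimate, applied once in each variable, bounds its oscillation by `ω(1/A) r^{-2d}`. Integrating
over `Q⁰ × Q²`, of measure `≈ ℓ(Q¹)^{2d}`, gives (iii) and (iv), the lower bound in (iv) once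
`ω(1/A)` is small compared with `c`.

`K` is not assumed measurable: the regularity estimate makes it continuous off the diagonal, and
this continuity supplies the integrability that the manipulations of the iterated integrals need.
-/

end Paper

section IteratedSetIntegral

variable {X Y E : Type*}

lemma ContinuousOn.integrableOn_of_bounded [TopologicalSpace X] [SecondCountableTopology X]
    [MeasurableSpace X] [OpensMeasurableSpace X] [NormedAddCommGroup E] {μ : Measure X}
    {s : Set X} {f : X → E} {M : ℝ} (hf : ContinuousOn f s) (hs : MeasurableSet s)
    (hμs : μ s < ∞) (hM : ∀ x ∈ s, ‖f x‖ ≤ M) : IntegrableOn f s μ :=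
  ⟨hf.aestronglyMeasurable hs,
    .restrict_of_bounded _ hμs ((ae_restrict_iff' hs).2 (ae_of_all _ hM))⟩

lemma continuousOn_setIntegral_of_continuousOn [TopologicalSpace X] [FirstCountableTopology X]
    [TopologicalSpace Y] [SecondCountableTopology Y] [MeasurableSpace Y] [OpensMeasurableSpace Y]
    [NormedAddCommGroup E] [NormedSpace ℝ E] {ν : Measure Y} {s : Set X} {t : Set Y}
    {F : X → Y → E} {M : ℝ} (ht : MeasurableSet t) (hνt : ν t < ∞)
    (hFx : ∀ x ∈ s, ContinuousOn (F x) t) (hFy : ∀ y ∈ t, ContinuousOn (fun x => F x y) s)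
    (hM : ∀ x ∈ s, ∀ y ∈ t, ‖F x y‖ ≤ M) :
    ContinuousOn (fun x => ∫ y in t, F x y ∂ν) s := by
  have : IsFiniteMeasure (ν.restrict t) := ⟨by simpa using hνt⟩
  exact continuousOn_of_dominated (bound := fun _ => M)
    (fun x hx => (hFx x hx).aestronglyMeasurable ht)
    (fun x hx => (ae_restrict_iff' ht).2 (ae_of_all _ (hM x hx))) (integrable_const M)
    ((ae_restrict_iff' ht).2 (ae_of_all _ hFy))

variable [MeasurableSpace X] [MeasurableSpace Y] [NormedAddCommGroup E] [NormedSpace ℝ E]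
  {μ : Measure X} {ν : Measure Y} {s : Set X} {t : Set Y} {F : X → Y → E} {M : ℝ}

lemma norm_setIntegral_setIntegral_le (hμs : μ s < ∞) (hνt : ν t < ∞)
    (hM : ∀ x ∈ s, ∀ y ∈ t, ‖F x y‖ ≤ M) :
    ‖∫ x in s, ∫ y in t, F x y ∂ν ∂μ‖ ≤ M * (μ.real s * ν.real t) := by
  rw [← mul_assoc, mul_right_comm]
  exact norm_setIntegral_le_of_norm_le_const hμs
    fun x hx => norm_setIntegral_le_of_norm_le_const hνt (hM x hx)

lemma setIntegral_setIntegral_le_of_norm_le {F : X → Y → ℝ} (hμs : μ s < ∞) (hνt : ν t < ∞)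
    (hM : ∀ x ∈ s, ∀ y ∈ t, ‖F x y‖ ≤ M) :
    ∫ x in s, ∫ y in t, F x y ∂ν ∂μ ≤ M * (μ.real s * ν.real t) :=
  (le_abs_self _).trans (norm_setIntegral_setIntegral_le hμs hνt hM)

variable [TopologicalSpace X] [SecondCountableTopology X] [OpensMeasurableSpace X]
  [TopologicalSpace Y] [SecondCountableTopology Y] [OpensMeasurableSpace Y]
  (hs : MeasurableSet s) (hμs : μ s < ∞) (ht : MeasurableSet t) (hνt : ν t < ∞)
  (hFx : ∀ x ∈ s, ContinuousOn (F x) t) (hFy : ∀ y ∈ t, ContinuousOn (fun x => F x y) s)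
  (hM : ∀ x ∈ s, ∀ y ∈ t, ‖F x y‖ ≤ M)
include hs hμs ht hνt hFx hFy hM

lemma integrableOn_setIntegral_of_continuousOn :
    IntegrableOn (fun x => ∫ y in t, F x y ∂ν) s μ :=
  (continuousOn_setIntegral_of_continuousOn ht hνt hFx hFy hM).integrableOn_of_bounded hs hμs
    fun x hx => norm_setIntegral_le_of_norm_le_const hνt (hM x hx)

lemma norm_setIntegral_setIntegral_le_setIntegral_setIntegral_norm :
    ‖∫ x in s, ∫ y in t, F x y ∂ν ∂μ‖ ≤ ∫ x in s, ∫ y in t, ‖F x y‖ ∂ν ∂μ := by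
  have hint : IntegrableOn (fun x => ∫ y in t, ‖F x y‖ ∂ν) s μ :=
    integrableOn_setIntegral_of_continuousOn hs hμs ht hνt (fun x hx => (hFx x hx).norm)
      (fun y hy => (hFy y hy).norm) (fun x hx y hy => by simpa using hM x hx y hy)
  refine (norm_integral_le_integral_norm _).trans
    (integral_mono_of_nonneg (ae_of_all _ fun _ => norm_nonneg _) hint ?_)
  exact (ae_restrict_iff' hs).2 (ae_of_all _ fun _ _ => norm_integral_le_integral_norm _)

variable [CompleteSpace E]

lemma setIntegral_setIntegral_sub_const (k : E) :
    ∫ x in s, ∫ y in t, (F x y - k) ∂ν ∂μ =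
      (∫ x in s, ∫ y in t, F x y ∂ν ∂μ) - (μ.real s * ν.real t) • k := by
  have hinner : ∀ x ∈ s, ∫ y in t, (F x y - k) ∂ν = (∫ y in t, F x y ∂ν) - ν.real t • k :=
    fun x hx => by
      rw [integral_sub ((hFx x hx).integrableOn_of_bounded ht hνt (hM x hx))
        (integrableOn_const hνt.ne), setIntegral_const]
  rw [setIntegral_congr_fun hs hinner,
    integral_sub (integrableOn_setIntegral_of_continuousOn hs hμs ht hνt hFx hFy hM)
      (integrableOn_const hμs.ne), setIntegral_const, smul_smul]

lemma mul_sub_le_norm_setIntegral_setIntegral (k : E) {B : ℝ}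
    (hB : ∀ x ∈ s, ∀ y ∈ t, ‖F x y - k‖ ≤ B) :
    (μ.real s * ν.real t) * (‖k‖ - B) ≤ ‖∫ x in s, ∫ y in t, F x y ∂ν ∂μ‖ := by
  have hdiff := norm_setIntegral_setIntegral_le hμs hνt hB
  rw [setIntegral_setIntegral_sub_const hs hμs ht hνt hFx hFy hM k] at hdiff
  have := norm_sub_norm_le ((μ.real s * ν.real t) • k) (∫ x in s, ∫ y in t, F x y ∂ν ∂μ)
  rw [norm_sub_rev, norm_smul, Real.norm_of_nonneg (by positivity)] at this
  linarith

end IteratedSetIntegral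

lemma le_div_mul_of_div_pow_le_div_pow {c C r S : ℝ} {n : ℕ} (hn : n ≠ 0) (hc : 0 < c)
    (hr : 0 < r) (hrS : r ≤ S) (h : c / r ^ n ≤ C / S ^ n) : S ≤ C / c * r := by
  have hS : 0 < S := hr.trans_le hrS
  have hpow : (S / r) ^ n ≤ C / c := by
    rw [div_le_div_iff₀ (by positivity) (by positivity)] at h
    rw [div_pow, div_le_div_iff₀ (by positivity) hc]
    linarith
  have := (le_self_pow₀ ((one_le_div hr).2 hrS) hn).trans hpow
  rwa [div_le_iff₀ hr] at this

lemma div_mul_le_of_le_two_mul_pow {A ℓ M V : ℝ} {n : ℕ} (hA : 0 < A) (hℓ : 0 < ℓ) (hM : 0 ≤ M)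
    (hV : V ≤ (2 * ℓ) ^ n) : M / (A * ℓ / 2) ^ n * V ≤ 4 ^ n * M / A ^ n :=
  calc M / (A * ℓ / 2) ^ n * V ≤ M / (A * ℓ / 2) ^ n * (2 * ℓ) ^ n := by gcongr
    _ = 4 ^ n * M / A ^ n := by
      have h4 : 2 * ℓ / (A * ℓ / 2) = 4 / A := by
        field_simp
        ring
      rw [div_mul_eq_mul_div, mul_div_assoc, ← div_pow, h4, div_pow]
      ring

namespace Paper

variable {d : ℕ}

open scoped Topology

namespace IsModulus

variable {ω : ℝ → ℝ} (hω : IsModulus ω)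
include hω

lemma nonneg (t : ℝ) : 0 ≤ ω t := hω.2.1 t

lemma mono {s t : ℝ} (hs : 0 ≤ s) (hst : s ≤ t) : ω s ≤ ω t :=
  hω.2.2.1 hs (hs.trans hst) hst

lemma le_nat_mul (n : ℕ) {t : ℝ} (ht : 0 ≤ t) : ω (n * t) ≤ n * ω t := by
  induction n with
  | zero => simp [hω.1]
  | succ n ih =>
    calc ω ((n + 1 : ℕ) * t) = ω (n * t + t) := by push_cast; ring_nf
      _ ≤ ω (n * t) + ω t := hω.2.2.2.1 _ _ (by positivity) ht
      _ ≤ (n + 1 : ℕ) * ω t := by push_cast; linarith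

lemma tendsto_nhdsWithin_Ici : Tendsto ω (𝓝[Ici 0] 0) (𝓝 0) := by
  rw [← Ioi_insert, nhdsWithin_insert, tendsto_sup, tendsto_pure_left]
  exact ⟨fun s hs => by rw [hω.1]; exact mem_of_mem_nhds hs, hω.2.2.2.2⟩

lemma eventually_const_mul_inv_lt (C : ℝ) {ε : ℝ} (hε : 0 < ε) :
    ∀ᶠ A in atTop, C * ω A⁻¹ < ε := by
  have h : Tendsto (fun A : ℝ => C * ω A⁻¹) atTop (𝓝 (C * 0)) :=
    (hω.2.2.2.2.comp tendsto_inv_atTop_nhdsGT_zero).const_mul C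
  exact (tendsto_order.1 (by simpa using h)).2 ε hε

end IsModulus

namespace Cube

lemma set_eq_preimage (Q : Cube d) : Q.set =
    (MeasurableEquiv.toLp 2 (Fin d → ℝ)).symm ⁻¹'
      (univ.pi fun i => Ico (Q.center i - Q.side / 2) (Q.center i + Q.side / 2)) := by
  ext x
  simp [Cube.set, Set.mem_pi, MeasurableEquiv.toLp_symm_apply]

lemma measurableSet_set (Q : Cube d) : MeasurableSet Q.set := by
  rw [set_eq_preimage]
  exact MeasurableEquiv.measurable _ (.univ_pi fun _ => measurableSet_Ico)

lemma volume_set (Q : Cube d) : volume Q.set = ENNReal.ofReal (Q.side ^ d) := by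
  rw [set_eq_preimage,
    (EuclideanSpace.volume_preserving_symm_measurableEquiv_toLp (Fin d)).measure_preimage
      (MeasurableSet.univ_pi fun _ => measurableSet_Ico).nullMeasurableSet, volume_pi_pi]
  simp [Real.volume_Ico, ENNReal.ofReal_pow Q.side_pos.le]

lemma volume_set_lt_top (Q : Cube d) : volume Q.set < ∞ := by
  simp [volume_set]

lemma measureReal_set (Q : Cube d) : volume.real Q.set = Q.side ^ d := by
  rw [measureReal_def, volume_set, ENNReal.toReal_ofReal (pow_nonneg Q.side_pos.le d)]

lemma measureReal_set_le (Q : Cube d) {s : ℝ} (h : Q.side ≤ s) : volume.real Q.set ≤ s ^ d :=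
  Q.measureReal_set ▸ pow_le_pow_left₀ Q.side_pos.le h d

lemma le_measureReal_set (Q : Cube d) {s : ℝ} (hs : 0 ≤ s) (h : s ≤ Q.side) :
    s ^ d ≤ volume.real Q.set :=
  Q.measureReal_set ▸ pow_le_pow_left₀ hs h d

lemma center_mem (Q : Cube d) : Q.center ∈ Q.set := fun _ => by
  constructor <;> linarith [Q.side_pos]

lemma norm_sub_le {Q : Cube d} {u v : Rd d} (hu : u ∈ Q.set) (hv : v ∈ Q.set) :
    ‖u - v‖ ≤ d * Q.side := by
  have hcoord : ∀ i, ‖(u - v) i‖ ^ 2 ≤ Q.side ^ 2 := fun i => by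
    obtain ⟨hu₁, hu₂⟩ := hu i
    obtain ⟨hv₁, hv₂⟩ := hv i
    rw [Real.norm_eq_abs, sq_abs, PiLp.sub_apply]
    nlinarith
  rw [EuclideanSpace.norm_eq, Real.sqrt_le_left (by positivity [Q.side_pos])]
  calc ∑ i, ‖(u - v) i‖ ^ 2 ≤ ∑ _i : Fin d, Q.side ^ 2 := Finset.sum_le_sum fun i _ => hcoord i
    _ = d * Q.side ^ 2 := by simp
    _ ≤ (d * Q.side) ^ 2 := by
      rw [mul_pow]
      gcongr
      exact_mod_cast Nat.le_self_pow two_ne_zero d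

end Cube

lemma IsDyadicGrid.exists_mem_lt_side_le_two_mul {D : Set (Cube d)} (hD : IsDyadicGrid D) (x : Rd d)
    {ℓ : ℝ} (hℓ : 0 < ℓ) : ∃ Q ∈ D, x ∈ Q.set ∧ ℓ < Q.side ∧ Q.side ≤ 2 * ℓ := by
  obtain ⟨Q, ⟨hQD, hside, hxQ⟩, -⟩ := hD.2.1 (Int.log 2 ℓ + 1) x
  have hlog := Int.zpow_log_le_self (b := 2) one_lt_two hℓ
  refine ⟨Q, hQD, hxQ, ?_, ?_⟩
  · simpa [hside] using Int.lt_zpow_succ_log_self (b := 2) one_lt_two ℓ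
  · rw [hside, zpow_add_one₀ two_ne_zero]
    push_cast at hlog
    linarith

def maxDist (x y z : Rd d) : ℝ := max (max ‖x - y‖ ‖x - z‖) ‖y - z‖

section maxDist

variable {x y z : Rd d}

lemma maxDist_le_add : maxDist x y z ≤ ‖x - y‖ + ‖x - z‖ := by
  have := norm_sub_le_norm_sub_add_norm_sub y x z
  rw [norm_sub_rev y x] at this
  exact max_le (max_le (by linarith [norm_nonneg (x - z)]) (by linarith [norm_nonneg (x - y)]))
    this

lemma maxDist_swap₁₂ : maxDist y x z = maxDist x y z := by
  simp only [maxDist, norm_sub_rev y x, max_right_comm]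

lemma maxDist_swap₁₃ : maxDist z y x = maxDist x y z := by
  simp only [maxDist, norm_sub_rev z y, norm_sub_rev z x, norm_sub_rev y x]
  ac_rfl

lemma maxDist_le_add_of_near {x' y' z' : Rd d} {δ : ℝ} (hx : ‖x' - x‖ ≤ δ) (hy : ‖y' - y‖ ≤ δ)
    (hz : ‖z' - z‖ ≤ δ) : maxDist x y z ≤ maxDist x' y' z' + 2 * δ := by
  have key : ∀ a b a' b' : Rd d, ‖a' - a‖ ≤ δ → ‖b' - b‖ ≤ δ → ‖a - b‖ ≤ ‖a' - b'‖ + 2 * δ :=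
    fun a b a' b' ha hb => by
      have := dist_triangle4 a a' b' b
      rw [dist_comm a a'] at this
      simp only [dist_eq_norm] at this
      linarith
  have h₁ : ‖x' - y'‖ ≤ maxDist x' y' z' := (le_max_left _ _).trans (le_max_left _ _)
  have h₂ : ‖x' - z'‖ ≤ maxDist x' y' z' := (le_max_right _ _).trans (le_max_left _ _)
  have h₃ : ‖y' - z'‖ ≤ maxDist x' y' z' := le_max_right _ _
  exact max_le (max_le (by linarith [key x y x' y' hx hy]) (by linarith [key x z x' z' hx hz]))
    (by linarith [key y z y' z' hy hz])

lemma max_le_maxDist : max ‖x - y‖ ‖z - y‖ ≤ maxDist x y z := by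
  rw [norm_sub_rev z y]
  exact max_le ((le_max_left _ _).trans (le_max_left _ _)) (le_max_right _ _)

lemma maxDist_le_two_mul_max : maxDist x y z ≤ 2 * max ‖x - y‖ ‖z - y‖ := by
  have hxz := norm_sub_le_norm_sub_add_norm_sub x y z
  rw [norm_sub_rev y z] at hxz
  have := le_max_left ‖x - y‖ ‖z - y‖
  have := le_max_right ‖x - y‖ ‖z - y‖
  have := norm_nonneg (x - y)
  unfold maxDist
  rw [norm_sub_rev y z]
  exact max_le (max_le (by linarith) (by linarith)) (by linarith)

end maxDist

def RegularInFirst (d : ℕ) (G : Rd d → Rd d → Rd d → ℂ) (ω : ℝ → ℝ) : Prop :=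
  ∀ x x' y z : Rd d, ‖x - x'‖ ≤ (1 / 2) * max ‖x - y‖ ‖x - z‖ →
    ‖G x y z - G x' y z‖ ≤
      ω (‖x - x'‖ / (‖x - y‖ + ‖x - z‖)) / (‖x - y‖ + ‖x - z‖) ^ (2 * d)

namespace RegularInFirst

variable {G : Rd d → Rd d → Rd d → ℂ} {ω : ℝ → ℝ} (hG : RegularInFirst d G ω)
  (hω : IsModulus ω)
include hG hω

lemma norm_sub_le {R δ : ℝ} (hR : 0 < R) (hδR : δ ≤ R / 4) {x x' y z : Rd d}
    (hsum : R ≤ ‖x - y‖ + ‖x - z‖) (hxx' : ‖x - x'‖ ≤ δ) :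
    ‖G x y z - G x' y z‖ ≤ ω (δ / R) / R ^ (2 * d) := by
  set S := ‖x - y‖ + ‖x - z‖
  have hS : 0 < S := hR.trans_le hsum
  have hmax : S ≤ 2 * max ‖x - y‖ ‖x - z‖ := by
    linarith [le_max_left ‖x - y‖ ‖x - z‖, le_max_right ‖x - y‖ ‖x - z‖]
  have hδ : 0 ≤ δ := (norm_nonneg _).trans hxx'
  calc ‖G x y z - G x' y z‖ ≤ ω (‖x - x'‖ / S) / S ^ (2 * d) := hG x x' y z (by linarith)
    _ ≤ ω (δ / R) / S ^ (2 * d) := by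
      gcongr
      exact hω.mono (by positivity) (div_le_div₀ hδ hxx' hR hsum)
    _ ≤ ω (δ / R) / R ^ (2 * d) := by
      gcongr
      exact hω.nonneg _

lemma continuousAt {x y z : Rd d} (hxyz : 0 < ‖x - y‖ + ‖x - z‖) :
    ContinuousAt (fun x' => G x' y z) x := by
  set S := ‖x - y‖ + ‖x - z‖
  rw [ContinuousAt, tendsto_iff_norm_sub_tendsto_zero]
  have hcont : Continuous fun x' => ‖x - x'‖ / S :=
    (continuous_const.sub continuous_id).norm.div_const S
  have hratio : Tendsto (fun x' => ‖x - x'‖ / S) (𝓝 x) (𝓝[Ici 0] 0) :=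
    tendsto_nhdsWithin_iff.2
      ⟨by simpa using hcont.tendsto x, Eventually.of_forall fun _ => mem_Ici.2 (by positivity)⟩
  have hlim : Tendsto (fun x' => ω (‖x - x'‖ / S) / S ^ (2 * d)) (𝓝 x) (𝓝 0) := by
    simpa using (hω.tendsto_nhdsWithin_Ici.comp hratio).div_const (S ^ (2 * d))
  refine squeeze_zero' (Eventually.of_forall fun _ => norm_nonneg _) ?_ hlim
  filter_upwards [Metric.ball_mem_nhds x (by positivity : 0 < S / 4)] with x' hx'
  rw [Metric.mem_ball, dist_comm, dist_eq_norm] at hx'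
  rw [norm_sub_rev]
  exact hG.norm_sub_le hω hxyz hx'.le le_rfl le_rfl

end RegularInFirst

namespace RegEstimate

variable {K : Rd d → Rd d → Rd d → ℂ} {ω : ℝ → ℝ} (hK : RegEstimate d K ω)
include hK

lemma regularInFirst_fst : RegularInFirst d K ω := hK K (by simp)

lemma regularInFirst_snd : RegularInFirst d (fun x y z => K y x z) ω := hK _ (by simp)

lemma regularInFirst_thd : RegularInFirst d (fun x y z => K z y x) ω := hK _ (by simp)

end RegEstimate

lemma SizeEstimate.norm_le {K : Rd d → Rd d → Rd d → ℂ} {CK R : ℝ} (hK : SizeEstimate d K CK)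
    (hR : 0 < R) {x y z : Rd d} (hsum : R ≤ ‖x - y‖ + ‖x - z‖) :
    ‖K x y z‖ ≤ CK / R ^ (2 * d) := by
  have hS : 0 < ‖x - y‖ + ‖x - z‖ := hR.trans_le hsum
  have hKS := hK x y z fun ⟨hxy, hyz⟩ => by simp [hxy, hyz] at hS
  have hCK : 0 ≤ CK := by
    simpa using (le_div_iff₀ (by positivity)).1 ((norm_nonneg _).trans hKS)
  exact hKS.trans (by gcongr)

section NearSeparated

variable {x₀ y₀ z₀ x y z : Rd d} {R δ : ℝ}

lemma le_maxDist_of_near (hsep : 2 * R ≤ maxDist x₀ y₀ z₀) (hδR : δ ≤ R / 2)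
    (hx : ‖x - x₀‖ ≤ δ) (hy : ‖y - y₀‖ ≤ δ) (hz : ‖z - z₀‖ ≤ δ) : R ≤ maxDist x y z := by
  linarith [maxDist_le_add_of_near hx hy hz]

lemma RegEstimate.norm_sub_le_of_near {K : Rd d → Rd d → Rd d → ℂ} {ω : ℝ → ℝ}
    (hK : RegEstimate d K ω) (hω : IsModulus ω) (hR : 0 < R) (hδR : δ ≤ R / 4)
    (hsep : 2 * R ≤ maxDist x₀ y₀ z₀)
    (hx : ‖x - x₀‖ ≤ δ) (hy : ‖y - y₀‖ ≤ δ) (hz : ‖z - z₀‖ ≤ δ) :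
    ‖K x y z - K x₀ y₀ z₀‖ ≤ 3 * ω (δ / R) / R ^ (2 * d) := by
  have hδ : 0 ≤ δ := (norm_nonneg _).trans hx
  have h₀ : ‖x₀ - x₀‖ ≤ δ := by simpa using hδ
  have h₀' : ‖y₀ - y₀‖ ≤ δ := by simpa using hδ
  have hδR' : δ ≤ R / 2 := by linarith
  have e₁ : ‖K x y z - K x₀ y z‖ ≤ ω (δ / R) / R ^ (2 * d) :=
    hK.regularInFirst_fst.norm_sub_le hω hR hδR
      ((le_maxDist_of_near hsep hδR' hx hy hz).trans maxDist_le_add) hx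
  have e₂ : ‖K x₀ y z - K x₀ y₀ z‖ ≤ ω (δ / R) / R ^ (2 * d) := by
    refine hK.regularInFirst_snd.norm_sub_le hω hR hδR ?_ hy
    rw [← maxDist_swap₁₂] at hsep
    exact (le_maxDist_of_near hsep hδR' hy h₀ hz).trans maxDist_le_add
  have e₃ : ‖K x₀ y₀ z - K x₀ y₀ z₀‖ ≤ ω (δ / R) / R ^ (2 * d) := by
    refine hK.regularInFirst_thd.norm_sub_le hω hR hδR ?_ hz
    rw [← maxDist_swap₁₃] at hsep
    exact (le_maxDist_of_near hsep hδR' hz h₀' h₀).trans maxDist_le_add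
  calc ‖K x y z - K x₀ y₀ z₀‖
      ≤ ‖K x y z - K x₀ y z‖ + ‖K x₀ y z - K x₀ y₀ z‖ + ‖K x₀ y₀ z - K x₀ y₀ z₀‖ :=
        by simpa only [dist_eq_norm] using dist_triangle4 _ (K x₀ y z) (K x₀ y₀ z) _
    _ ≤ 3 * ω (δ / R) / R ^ (2 * d) := by
      rw [mul_div_assoc]
      linarith

end NearSeparated

section Kernel

variable {K : Rd d → Rd d → Rd d → ℂ} {CK c : ℝ} {ω : ℝ → ℝ}

lemma NonDegenerate.exists_maxDist_le (hd : d ≠ 0) (hc : 0 < c) (hK : SizeEstimate d K CK)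
    (hnd : NonDegenerate d K c) (y : Rd d) {r : ℝ} (hr : 0 < r) :
    ∃ x z, r < maxDist x y z ∧ maxDist x y z ≤ CK / c * r ∧
      c / r ^ (2 * d) ≤ ‖K x y z‖ ∧ ‖K x y z‖ ≤ CK / r ^ (2 * d) := by
  obtain ⟨x, z, hsep, hlow⟩ := hnd.1 y r hr
  have hsum : r ≤ ‖x - y‖ + ‖x - z‖ := hsep.le.trans maxDist_le_add
  have hup := hK.norm_le (hr.trans_le hsum) le_rfl
  refine ⟨x, z, hsep, maxDist_le_add.trans ?_, hlow, hK.norm_le hr hsum⟩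
  exact le_div_mul_of_div_pow_le_div_pow (by omega) hc hr hsum (hlow.trans hup)

variable {x₀ y₀ z₀ : Rd d} {s₀ s₁ s₂ : Set (Rd d)} {R δ : ℝ}

lemma RegEstimate.setIntegral_estimates_of_near (hK : SizeEstimate d K CK)
    (hreg : RegEstimate d K ω) (hω : IsModulus ω) (hR : 0 < R) (hδR : δ ≤ R / 4)
    (hsep : 2 * R ≤ maxDist x₀ y₀ z₀) (hs₀ : MeasurableSet s₀) (hs₂ : MeasurableSet s₂)
    (hμs₀ : volume s₀ < ∞) (hμs₂ : volume s₂ < ∞) (h₀ : ∀ x ∈ s₀, ‖x - x₀‖ ≤ δ)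
    (h₁ : ∀ y ∈ s₁, ‖y - y₀‖ ≤ δ) (h₂ : ∀ z ∈ s₂, ‖z - z₀‖ ≤ δ) {y : Rd d} (hy : y ∈ s₁) :
    let V := volume.real s₀ * volume.real s₂
    let W := 3 * ω (δ / R) / R ^ (2 * d)
    (∫ x in s₀, ∫ z in s₂, ‖K x y z - K x₀ y₀ z₀‖) ≤ W * V ∧
      V * (‖K x₀ y₀ z₀‖ - W) ≤ ‖∫ x in s₀, ∫ z in s₂, K x y z‖ ∧
      ‖∫ x in s₀, ∫ z in s₂, K x y z‖ ≤ ∫ x in s₀, ∫ z in s₂, ‖K x y z‖ ∧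
      (∫ x in s₀, ∫ z in s₂, ‖K x y z‖) ≤ CK / R ^ (2 * d) * V := by
  intro V W
  have hfar : ∀ x ∈ s₀, ∀ z ∈ s₂, R ≤ maxDist x y z := fun x hx z hz =>
    le_maxDist_of_near hsep (by linarith [(norm_nonneg _).trans (h₁ y hy)]) (h₀ x hx) (h₁ y hy)
      (h₂ z hz)
  have hsize : ∀ x ∈ s₀, ∀ z ∈ s₂, ‖K x y z‖ ≤ CK / R ^ (2 * d) := fun x hx z hz =>
    hK.norm_le hR ((hfar x hx z hz).trans maxDist_le_add)
  have hosc : ∀ x ∈ s₀, ∀ z ∈ s₂, ‖K x y z - K x₀ y₀ z₀‖ ≤ W := fun x hx z hz =>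
    hreg.norm_sub_le_of_near hω hR hδR hsep (h₀ x hx) (h₁ y hy) (h₂ z hz)
  have hcont_z : ∀ x ∈ s₀, ContinuousOn (fun z => K x y z) s₂ := fun x hx z hz => by
    have hfar' := hfar x hx z hz
    rw [← maxDist_swap₁₃] at hfar'
    exact (hreg.regularInFirst_thd.continuousAt hω
      (hR.trans_le (hfar'.trans maxDist_le_add))).continuousWithinAt
  have hcont_x : ∀ z ∈ s₂, ContinuousOn (fun x => K x y z) s₀ := fun z hz x hx =>
    (hreg.regularInFirst_fst.continuousAt hω
      (hR.trans_le ((hfar x hx z hz).trans maxDist_le_add))).continuousWithinAt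
  exact ⟨setIntegral_setIntegral_le_of_norm_le hμs₀ hμs₂ (by simpa using hosc),
    mul_sub_le_norm_setIntegral_setIntegral hs₀ hμs₀ hs₂ hμs₂ hcont_z hcont_x hsize _ hosc,
    norm_setIntegral_setIntegral_le_setIntegral_setIntegral_norm hs₀ hμs₀ hs₂ hμs₂ hcont_z
      hcont_x hsize,
    setIntegral_setIntegral_le_of_norm_le hμs₀ hμs₂ (by simpa using hsize)⟩

end Kernel

lemma setIntegral_estimates_of_separated_cubes {K : Rd d → Rd d → Rd d → ℂ} {CK c : ℝ}
    {ω : ℝ → ℝ} (hsize : SizeEstimate d K CK) (hω : IsModulus ω) (hreg : RegEstimate d K ω)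
    {A : ℝ} (hA0 : 0 < A) (hA : 16 * d ≤ A) {Q0 Q1 Q2 : Cube d} {x0 x2 : Rd d} (hx0 : x0 ∈ Q0.set)
    (hx2 : x2 ∈ Q2.set) (hℓQ0 : Q1.side ≤ Q0.side) (hQ0ℓ : Q0.side ≤ 2 * Q1.side)
    (hℓQ2 : Q1.side ≤ Q2.side) (hQ2ℓ : Q2.side ≤ 2 * Q1.side)
    (hsep : A * Q1.side < maxDist x0 Q1.center x2)
    (hlow : c / (A * Q1.side) ^ (2 * d) ≤ ‖K x0 Q1.center x2‖) (hCK : 0 ≤ CK) {y : Rd d}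
    (hy : y ∈ Q1.set) :
    (∫ x in Q0.set, ∫ z in Q2.set, ‖K x y z - K x0 Q1.center x2‖) ≤
        12 * d * 4 ^ (2 * d) * ω A⁻¹ / A ^ (2 * d) ∧
      (c - 12 * d * 4 ^ (2 * d) * ω A⁻¹) / A ^ (2 * d) ≤
        ‖∫ x in Q0.set, ∫ z in Q2.set, K x y z‖ ∧
      ‖∫ x in Q0.set, ∫ z in Q2.set, K x y z‖ ≤ ∫ x in Q0.set, ∫ z in Q2.set, ‖K x y z‖ ∧
      (∫ x in Q0.set, ∫ z in Q2.set, ‖K x y z‖) ≤ 4 ^ (2 * d) * CK / A ^ (2 * d) := by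
  set ℓ := Q1.side
  have hℓ : 0 < ℓ := Q1.side_pos
  have hnear : ∀ Q : Cube d, Q.side ≤ 2 * ℓ → ∀ u ∈ Q.set, ∀ v ∈ Q.set, ‖u - v‖ ≤ 2 * d * ℓ :=
    fun Q hQ u hu v hv => (Cube.norm_sub_le hu hv).trans
      ((mul_le_mul_of_nonneg_left hQ d.cast_nonneg).trans_eq (by ring))
  -- every point of `Qᵢ` lies within `δ = 2dℓ` of `x0`, `c_{Q1}`, `x2`; `δ ≤ R / 4` for `R = Aℓ/2`
  obtain ⟨hosc, hlower, hnorm, hupper⟩ :=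
    hreg.setIntegral_estimates_of_near hsize hω (by positivity : 0 < A * ℓ / 2)
      (by nlinarith : 2 * d * ℓ ≤ A * ℓ / 2 / 4) (by linarith) Q0.measurableSet_set
      Q2.measurableSet_set Q0.volume_set_lt_top Q2.volume_set_lt_top
      (fun x hx => hnear Q0 hQ0ℓ x hx x0 hx0)
      (fun y hy => hnear Q1 (by linarith) y hy _ Q1.center_mem)
      (fun z hz => hnear Q2 hQ2ℓ z hz x2 hx2) hy
  have hVup : volume.real Q0.set * volume.real Q2.set ≤ (2 * ℓ) ^ (2 * d) := by
    rw [two_mul d, pow_add]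
    exact mul_le_mul (Q0.measureReal_set_le hQ0ℓ) (Q2.measureReal_set_le hQ2ℓ) measureReal_nonneg
      (by positivity)
  have hVlow : ℓ ^ (2 * d) ≤ volume.real Q0.set * volume.real Q2.set := by
    rw [two_mul d, pow_add]
    exact mul_le_mul (Q0.le_measureReal_set hℓ.le hℓQ0) (Q2.le_measureReal_set hℓ.le hℓQ2)
      (by positivity) measureReal_nonneg
  have hω4d : ω (2 * d * ℓ / (A * ℓ / 2)) ≤ 4 * d * ω A⁻¹ := by
    have h := hω.le_nat_mul (4 * d) (inv_nonneg.2 hA0.le)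
    push_cast at h
    convert h using 2
    field_simp
    ring
  have hωA := hω.nonneg A⁻¹
  have hWV : 3 * ω (2 * d * ℓ / (A * ℓ / 2)) / (A * ℓ / 2) ^ (2 * d) *
      (volume.real Q0.set * volume.real Q2.set) ≤ 12 * d * 4 ^ (2 * d) * ω A⁻¹ / A ^ (2 * d) :=
    calc _ ≤ 3 * (4 * d * ω A⁻¹) / (A * ℓ / 2) ^ (2 * d) *
          (volume.real Q0.set * volume.real Q2.set) := by gcongr
      _ ≤ _ := (div_mul_le_of_le_two_mul_pow hA0 hℓ (by positivity) hVup).trans_eq (by ring)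
  have hVk : c / A ^ (2 * d) ≤ volume.real Q0.set * volume.real Q2.set * ‖K x0 Q1.center x2‖ :=
    calc c / A ^ (2 * d) = ℓ ^ (2 * d) * (c / (A * ℓ) ^ (2 * d)) := by
          rw [mul_pow]
          field_simp
      _ ≤ _ := (mul_le_mul_of_nonneg_left hlow (by positivity)).trans
          (mul_le_mul_of_nonneg_right hVlow (norm_nonneg _))
  refine ⟨hosc.trans hWV, ?_, hnorm, hupper.trans (div_mul_le_of_le_two_mul_pow hA0 hℓ hCK hVup)⟩
  rw [sub_div]
  nlinarith

theorem exists_cubes_of_nonDegenerate {K : Rd d → Rd d → Rd d → ℂ} {CK c : ℝ} {ω : ℝ → ℝ}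
    (hd : d ≠ 0) (hc : 0 < c) (hsize : SizeEstimate d K CK) (hω : IsModulus ω)
    (hreg : RegEstimate d K ω) (hnd : NonDegenerate d K c) {A : ℝ} (hA : 16 * d ≤ A)
    (Q1 : Cube d) {D0 D2 : Set (Cube d)} (hD0 : IsDyadicGrid D0) (hD2 : IsDyadicGrid D2) :
    ∃ Q0 ∈ D0, ∃ Q2 ∈ D2, ∃ x0 ∈ Q0.set, ∃ x2 ∈ Q2.set,
      (A * Q1.side / 2 ≤ max ‖x0 - Q1.center‖ ‖x2 - Q1.center‖ ∧
        max ‖x0 - Q1.center‖ ‖x2 - Q1.center‖ ≤ CK / c * (A * Q1.side) ∧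
        Q1.side ≤ Q0.side ∧ Q0.side ≤ 2 * Q1.side ∧
        Q1.side ≤ Q2.side ∧ Q2.side ≤ 2 * Q1.side) ∧
      (c / (A ^ (2 * d) * Q1.vol ^ 2) ≤ ‖K x0 Q1.center x2‖ ∧
        ‖K x0 Q1.center x2‖ ≤ CK / (A ^ (2 * d) * Q1.vol ^ 2)) ∧
      ∀ y ∈ Q1.set,
        (∫ x in Q0.set, ∫ z in Q2.set, ‖K x y z - K x0 Q1.center x2‖) ≤
          12 * d * 4 ^ (2 * d) * ω A⁻¹ / A ^ (2 * d) ∧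
        (c - 12 * d * 4 ^ (2 * d) * ω A⁻¹) / A ^ (2 * d) ≤
          ‖∫ x in Q0.set, ∫ z in Q2.set, K x y z‖ ∧
        ‖∫ x in Q0.set, ∫ z in Q2.set, K x y z‖ ≤ ∫ x in Q0.set, ∫ z in Q2.set, ‖K x y z‖ ∧
        (∫ x in Q0.set, ∫ z in Q2.set, ‖K x y z‖) ≤ 4 ^ (2 * d) * CK / A ^ (2 * d) := by
  have hℓ := Q1.side_pos
  have hd1 : (1 : ℝ) ≤ d := by exact_mod_cast Nat.one_le_iff_ne_zero.2 hd
  have hA0 : 0 < A := by linarith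
  obtain ⟨x0, x2, hsep, hsepC, hlow, hup⟩ :=
    hnd.exists_maxDist_le hd hc hsize Q1.center (mul_pos hA0 hℓ)
  obtain ⟨Q0, hQ0, hx0, hℓQ0, hQ0ℓ⟩ := hD0.exists_mem_lt_side_le_two_mul x0 hℓ
  obtain ⟨Q2, hQ2, hx2, hℓQ2, hQ2ℓ⟩ := hD2.exists_mem_lt_side_le_two_mul x2 hℓ
  have hvol : A ^ (2 * d) * Q1.vol ^ 2 = (A * Q1.side) ^ (2 * d) := by
    rw [Cube.vol, ← pow_mul, mul_comm d 2, ← mul_pow]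
  have hCK : 0 ≤ CK := by
    have h := (norm_nonneg _).trans hup
    rwa [le_div_iff₀ (by positivity), zero_mul] at h
  refine ⟨Q0, hQ0, Q2, hQ2, x0, hx0, x2, hx2, ⟨?_, max_le_maxDist.trans hsepC, hℓQ0.le, hQ0ℓ,
    hℓQ2.le, hQ2ℓ⟩, ⟨hvol ▸ hlow, hvol ▸ hup⟩, fun y hy =>
    setIntegral_estimates_of_separated_cubes hsize hω hreg hA0 hA hx0 hx2 hℓQ0.le hQ0ℓ hℓQ2.le hQ2ℓ
      hsep hlow hCK hy⟩
  linarith [maxDist_le_two_mul_max (x := x0) (y := Q1.center) (z := x2)]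

/-- The bootstrap proposition for non-degenerate kernels satisfying
the size and `ω`-regularity estimates. -/
theorem statement1 (d : ℕ) (hd : 1 ≤ d) (K : Rd d → Rd d → Rd d → ℂ)
    (CK c : ℝ) (hc : 0 < c) (ω : ℝ → ℝ)
    (hsize : SizeEstimate d K CK) (hω : IsModulus ω)
    (hreg : RegEstimate d K ω) (hnd : NonDegenerate d K c) :
    ∃ c₀ C₀ A₁ : ℝ, 0 < c₀ ∧ c₀ ≤ C₀ ∧ 3 ≤ A₁ ∧
      ∀ A : ℝ, A₁ ≤ A →
      ∀ Q1 : Cube d, ∀ D0 D2 : Set (Cube d),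
        IsDyadicGrid D0 → IsDyadicGrid D2 →
        ∃ Q0 ∈ D0, ∃ Q2 ∈ D2, ∃ x0 ∈ Q0.set, ∃ x2 ∈ Q2.set,
          -- (i) separation and size of the cubes
          (c₀ * (A * Q1.side) ≤ max ‖x0 - Q1.center‖ ‖x2 - Q1.center‖ ∧
            max ‖x0 - Q1.center‖ ‖x2 - Q1.center‖ ≤ C₀ * (A * Q1.side) ∧
            c₀ * Q1.side ≤ Q0.side ∧ Q0.side ≤ C₀ * Q1.side ∧
            c₀ * Q1.side ≤ Q2.side ∧ Q2.side ≤ C₀ * Q1.side) ∧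
          -- (ii) size of the kernel at the distinguished points
          (c₀ / (A ^ (2 * d) * Q1.vol ^ 2) ≤ ‖K x0 Q1.center x2‖ ∧
            ‖K x0 Q1.center x2‖ ≤ C₀ / (A ^ (2 * d) * Q1.vol ^ 2)) ∧
          -- (iii) oscillation estimate
          (∀ y ∈ Q1.set,
            (∫ x in Q0.set, ∫ z in Q2.set, ‖K x y z - K x0 Q1.center x2‖) ≤
              C₀ * ω A⁻¹ / A ^ (2 * d)) ∧
          -- (iv) size of the integrals
          (∀ y ∈ Q1.set,
            c₀ / A ^ (2 * d) ≤ ‖∫ x in Q0.set, ∫ z in Q2.set, K x y z‖ ∧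
            ‖∫ x in Q0.set, ∫ z in Q2.set, K x y z‖ ≤
              ∫ x in Q0.set, ∫ z in Q2.set, ‖K x y z‖ ∧
            (∫ x in Q0.set, ∫ z in Q2.set, ‖K x y z‖) ≤ C₀ / A ^ (2 * d)) := by
  set Cω : ℝ := 12 * d * 4 ^ (2 * d)
  obtain ⟨Aω, hAω⟩ := eventually_atTop.1 (hω.eventually_const_mul_inv_lt Cω (half_pos hc))
  set c₀ := min (1 / 2) (c / 2)
  set C₀ := max (max 2 (CK / c)) (max CK (max Cω (4 ^ (2 * d) * CK)))
  have hc₀ : c₀ ≤ 1 / 2 := min_le_left _ _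
  have hc₀c : c₀ ≤ c / 2 := min_le_right _ _
  have h2C₀ : 2 ≤ C₀ := (le_max_left _ _).trans (le_max_left _ _)
  have hCKcC₀ : CK / c ≤ C₀ := (le_max_right _ _).trans (le_max_left _ _)
  have hCKC₀ : CK ≤ C₀ := (le_max_left _ _).trans (le_max_right _ _)
  have hCωC₀ : Cω ≤ C₀ := ((le_max_left _ _).trans (le_max_right _ _)).trans (le_max_right _ _)
  have h4CKC₀ : 4 ^ (2 * d) * CK ≤ C₀ :=
    ((le_max_right _ _).trans (le_max_right _ _)).trans (le_max_right _ _)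
  refine ⟨c₀, C₀, max (max 3 (16 * d)) Aω, lt_min one_half_pos (half_pos hc),
    hc₀.trans (by linarith), (le_max_left _ _).trans (le_max_left _ _),
    fun A hA Q1 D0 D2 hD0 hD2 => ?_⟩
  have hA3 : 3 ≤ A := ((le_max_left _ _).trans (le_max_left _ _)).trans hA
  have hA16 : 16 * (d : ℝ) ≤ A := ((le_max_right _ _).trans (le_max_left _ _)).trans hA
  have hωA : Cω * ω A⁻¹ < c / 2 := hAω A ((le_max_right _ _).trans hA)
  have hℓ := Q1.side_pos
  have hAd : 0 < A ^ (2 * d) := by positivity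
  have hvol : 0 < A ^ (2 * d) * Q1.vol ^ 2 := by unfold Cube.vol; positivity
  obtain ⟨Q0, hQ0, Q2, hQ2, x0, hx0, x2, hx2, ⟨h1, h2, h3, h4, h5, h6⟩, ⟨hlow, hup⟩, hint⟩ :=
    exists_cubes_of_nonDegenerate (by omega) hc hsize hω hreg hnd hA16 Q1 hD0 hD2
  refine ⟨Q0, hQ0, Q2, hQ2, x0, hx0, x2, hx2, ⟨?_, h2.trans (by gcongr), ?_, ?_, ?_, ?_⟩,
    ⟨(div_le_div_of_nonneg_right (by linarith) hvol.le).trans hlow,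
      hup.trans (div_le_div_of_nonneg_right hCKC₀ hvol.le)⟩, fun y hy => ?_, fun y hy => ?_⟩
  · exact (mul_le_mul_of_nonneg_right hc₀ (by positivity)).trans (by linarith)
  · exact (mul_le_mul_of_nonneg_right hc₀ hℓ.le).trans (by linarith)
  · exact h4.trans (by gcongr)
  · exact (mul_le_mul_of_nonneg_right hc₀ hℓ.le).trans (by linarith)
  · exact h6.trans (by gcongr)
  · exact (hint y hy).1.trans
      (div_le_div_of_nonneg_right (mul_le_mul_of_nonneg_right hCωC₀ (hω.nonneg _)) hAd.le)
  · obtain ⟨-, hlower, hnorm, hupper⟩ := hint y hy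
    exact ⟨(div_le_div_of_nonneg_right (by linarith) hAd.le).trans hlower, hnorm,
      hupper.trans (div_le_div_of_nonneg_right h4CKC₀ hAd.le)⟩

end Paper
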